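/- With the vertex-based uniform growth model, the expected Wiener index of the random tree T_I(1) obtained from the seed tree T by one application of Operation-I is E[W(T_I(1))] = W_T·(μS + 1)² + μ(μS + 1)·(Σ_{i=1}^{μ} p_i·C(m_i+1,2))·h² + { μ·Σ_{i=1}^{μ} p_i·Σ_{l=2}^{m_i} C(l,2) + [2S·C(μ,2) − μ²S]·Σ_{i=1}^{μ} p_i·C(m_i+1,2) }·h, where C(a,b) denotes the binomial coefficient (equal to 0 when a < b) and empty sums equal 0. -/

import Mathlib

set_option autoImplicit false

open Finset

/-- The two endpoints of an unordered pair, as a `Finset`. -/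
def sym2Finset (e : Sym2 ℕ) : Finset ℕ :=
  Sym2.lift ⟨fun a b => {a, b}, fun a b => by ext x; simp [or_comm]⟩ e

/-- The vertex set of the graph on `ℕ` whose edge set is the finite set `E`. -/
def verts (E : Finset (Sym2 ℕ)) : Finset ℕ := E.biUnion sym2Finset

/-- The Wiener index of the graph with edge set `E`: the sum of shortest-path
distances over all unordered pairs of vertices (here computed as half the sum
over ordered pairs). -/
noncomputable def wienerE (E : Finset (Sym2 ℕ)) : ℝ :=
  (∑ u ∈ verts E, ∑ v ∈ verts E,
    ((SimpleGraph.fromEdgeSet (↑E : Set (Sym2 ℕ))).dist u v : ℝ)) / 2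

/-- `E` is the edge set of a (nonempty, loopless, acyclic, connected) tree. -/
def IsTreeEdges (E : Finset (Sym2 ℕ)) : Prop :=
  E.Nonempty ∧ (∀ e ∈ E, ¬ e.IsDiag) ∧
  (SimpleGraph.fromEdgeSet (↑E : Set (Sym2 ℕ))).IsAcyclic ∧
  ∀ u ∈ verts E, ∀ v ∈ verts E,
    (SimpleGraph.fromEdgeSet (↑E : Set (Sym2 ℕ))).Reachable u v

/-- A base label strictly larger than every vertex label used in `E`. -/
def freshE (E : Finset (Sym2 ℕ)) : ℕ := (verts E).sup id + 1

/-- The `L` edges of a pendant path `root — f 0 — f 1 — ⋯ — f (L-1)`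
consisting of `L` new vertices attached to `root`. -/
def pathEdges (root : ℕ) (f : ℕ → ℕ) (L : ℕ) : Finset (Sym2 ℕ) :=
  (Finset.range L).image (fun j => if j = 0 then s(root, f 0) else s(f (j-1), f j))

/-- Fresh labels for the vertices of the paths attached by Operation-I:
vertex `j` of the `k`-th path attached at vertex `v`. -/
def lblI (B v k j : ℕ) : ℕ := B + Nat.pair v (Nat.pair k j)

/-- Operation-I (vertex-based uniform growth): given the choice function `c`
(the `k`-th path attached at vertex `v` gets `m (c v k)` vertices), attach to every
vertex `v` of `E` the `μ` chosen pendant paths, using fresh labels. -/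
def applyI (μ : ℕ) (m : Fin μ → ℕ) (E : Finset (Sym2 ℕ))
    (c : {x // x ∈ verts E} → Fin μ → Fin μ) : Finset (Sym2 ℕ) :=
  E ∪ (Finset.univ : Finset ({x // x ∈ verts E} × Fin μ)).biUnion
      (fun vk => pathEdges (vk.1 : ℕ)
        (fun j => lblI (freshE E) (vk.1 : ℕ) (vk.2 : ℕ) j) (m (c vk.1 vk.2)))

/-- One random step of Operation-I as an expectation transformer: the expected value
of `f` of the random tree obtained from `E` by one application of Operation-I, where
each path length index is chosen independently with probabilities `p`. -/
noncomputable def stepI (μ : ℕ) (p : Fin μ → ℝ) (m : Fin μ → ℕ)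
    (f : Finset (Sym2 ℕ) → ℝ) (E : Finset (Sym2 ℕ)) : ℝ :=
  ∑ c : {x // x ∈ verts E} → Fin μ → Fin μ,
    (∏ v : {x // x ∈ verts E}, ∏ k : Fin μ, p (c v k)) * f (applyI μ m E c)

/-- `expI μ p m f t E` is the expected value of `f (T_I(t))` for the random tree
`T_I(t)` obtained from the seed `E` by `t` independent applications of Operation-I. -/
noncomputable def expI (μ : ℕ) (p : Fin μ → ℝ) (m : Fin μ → ℕ)
    (f : Finset (Sym2 ℕ) → ℝ) : ℕ → Finset (Sym2 ℕ) → ℝ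
  | 0, E => f E
  | (t+1), E => stepI μ p m (fun Ep => expI μ p m f t Ep) E

/-!
In the grown tree the `j`-th vertex of one attached path and the `j'`-th vertex of another are
at distance `d_T(roots) + j + j'`, and two vertices of one path at distance `|j - j'|`: an
explicit walk gives the upper bound, and a 1-Lipschitz potential (distance to a root plus signed
height) the lower bound. Summing over ordered pairs of vertices writes `2 W(T_I(1))` as
`2 W_T` plus terms each involving the lengths of at most two distinct paths, so independence of
the lengths turns the expectation into products of `S`, `Σ p_i C(m_i + 1, 2)` and
`Σ p_i Σ_l C(l, 2)`. Counting the `h μ` attachment slots, each root carrying `μ` of them, gives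
the closed form.
-/

namespace SimpleGraph

variable {V : Type*} {G : SimpleGraph V}

theorem Walk.sub_le_length (φ : V → ℤ) (hφ : ∀ x y, G.Adj x y → φ x ≤ φ y + 1)
    {a b : V} (w : G.Walk a b) : φ a - φ b ≤ w.length := by
  induction w with
  | nil => simp
  | cons hadj _ ih =>
    rw [Walk.length_cons]
    have := hφ _ _ hadj
    push_cast
    linarith

theorem dist_eq_length_of_le_sub (φ : V → ℤ) (hφ : ∀ x y, G.Adj x y → φ x ≤ φ y + 1)
    {a b : V} (w : G.Walk a b) (hw : (w.length : ℤ) ≤ φ a - φ b) : G.dist a b = w.length := by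
  obtain ⟨w', hw'⟩ := Reachable.exists_walk_length_eq_dist ⟨w⟩
  have := w'.sub_le_length φ hφ
  have := dist_le w
  omega

end SimpleGraph

abbrev edgeGraph (E : Finset (Sym2 ℕ)) : SimpleGraph ℕ := SimpleGraph.fromEdgeSet ↑E

lemma mem_sym2Finset {x : ℕ} {e : Sym2 ℕ} : x ∈ sym2Finset e ↔ x ∈ e := by
  induction e using Sym2.ind with
  | _ a b => simp [sym2Finset, Sym2.mem_iff]

lemma mem_verts {x : ℕ} {E : Finset (Sym2 ℕ)} : x ∈ verts E ↔ ∃ e ∈ E, x ∈ e := by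
  simp [verts, mem_sym2Finset]

lemma verts_union (A B : Finset (Sym2 ℕ)) : verts (A ∪ B) = verts A ∪ verts B :=
  Finset.union_biUnion

lemma verts_biUnion {ι : Type*} [DecidableEq ι] (s : Finset ι) (f : ι → Finset (Sym2 ℕ)) :
    verts (s.biUnion f) = s.biUnion fun i => verts (f i) :=
  biUnion_biUnion _ _ _

lemma lt_freshE {E : Finset (Sym2 ℕ)} {x : ℕ} (hx : x ∈ verts E) : x < freshE E :=
  Nat.lt_succ_of_le (le_sup (f := id) hx)

lemma mem_verts_of_adj {E : Finset (Sym2 ℕ)} {x y : ℕ} (h : (edgeGraph E).Adj x y) :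
    x ∈ verts E ∧ y ∈ verts E := by
  rw [SimpleGraph.fromEdgeSet_adj] at h
  exact ⟨mem_verts.2 ⟨_, h.1, Sym2.mem_mk_left x y⟩, mem_verts.2 ⟨_, h.1, Sym2.mem_mk_right x y⟩⟩

lemma mem_pathEdges {r L : ℕ} {f : ℕ → ℕ} {e : Sym2 ℕ} :
    e ∈ pathEdges r f L ↔ ∃ j < L, e = if j = 0 then s(r, f 0) else s(f (j - 1), f j) := by
  simp [pathEdges, eq_comm]

lemma insert_verts_pathEdges (r : ℕ) (f : ℕ → ℕ) (L : ℕ) :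
    insert r (verts (pathEdges r f L)) = insert r ((range L).image f) := by
  ext x
  simp only [mem_insert, mem_verts, mem_pathEdges, mem_image, mem_range]
  constructor
  · rintro (rfl | ⟨e, ⟨j, hj, rfl⟩, hx⟩)
    · exact .inl rfl
    · split_ifs at hx with h0 <;> rw [Sym2.mem_iff] at hx
      · exact hx.imp id fun hx => ⟨0, by omega, hx.symm⟩
      · exact .inr (hx.elim (fun hx => ⟨j - 1, by omega, hx.symm⟩) fun hx => ⟨j, hj, hx.symm⟩)
  · rintro (rfl | ⟨j, hj, rfl⟩)
    · exact .inl rfl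
    · refine .inr ⟨_, ⟨j, hj, rfl⟩, ?_⟩
      split_ifs with h0
      · simp [h0]
      · simp

abbrev PathIndex (E : Finset (Sym2 ℕ)) (μ : ℕ) := {x // x ∈ verts E} × Fin μ

section GrownTree

variable {μ : ℕ} (m : Fin μ → ℕ) {E : Finset (Sym2 ℕ)} (c : {x // x ∈ verts E} → Fin μ → Fin μ)

def pathLength (vk : PathIndex E μ) : ℕ := m (c vk.1 vk.2)

/-- `pathVertex vk 0` is the root `vk.1` and `pathVertex vk (j + 1)` the `j`-th new vertex of the
path attached by Operation-I at `vk.1` as its `vk.2`-th path. -/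
def pathVertex (vk : PathIndex E μ) : ℕ → ℕ
  | 0 => vk.1
  | j + 1 => lblI (freshE E) vk.1 vk.2 j

variable {m c}

@[simp]
lemma pathVertex_zero (vk : PathIndex E μ) : pathVertex vk 0 = vk.1 := rfl

lemma pathVertex_zero_mem (vk : PathIndex E μ) : pathVertex vk 0 ∈ verts E := vk.1.2

lemma pathVertex_succ_not_mem (vk : PathIndex E μ) (j : ℕ) : pathVertex vk (j + 1) ∉ verts E :=
  fun h => (lt_freshE h).not_ge (Nat.le_add_right _ _)

lemma pathVertex_succ_inj {vk wk : PathIndex E μ} {j j' : ℕ} :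
    pathVertex vk (j + 1) = pathVertex wk (j' + 1) ↔ vk = wk ∧ j = j' := by
  simp only [pathVertex, lblI, Nat.add_left_cancel_iff, Nat.pair_eq_pair]
  rw [Prod.ext_iff, Subtype.ext_iff, Fin.ext_iff, and_assoc]

lemma mem_applyI {e : Sym2 ℕ} :
    e ∈ applyI μ m E c ↔ e ∈ E ∨ ∃ vk, ∃ i < pathLength m c vk,
      e = s(pathVertex vk i, pathVertex vk (i + 1)) := by
  simp only [applyI, mem_union, mem_biUnion, mem_univ, true_and, mem_pathEdges]
  refine or_congr Iff.rfl (exists_congr fun vk => exists_congr fun i => and_congr Iff.rfl ?_)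
  cases i <;> rfl

lemma edgeGraph_le_applyI : edgeGraph E ≤ edgeGraph (applyI μ m E c) :=
  SimpleGraph.fromEdgeSet_mono (by simp [applyI])

lemma exists_walk_pathVertex (vk : PathIndex E μ) {j' j : ℕ} (hj' : j' ≤ j)
    (hj : j ≤ pathLength m c vk) :
    ∃ w : (edgeGraph (applyI μ m E c)).Walk (pathVertex vk j') (pathVertex vk j),
      w.length = j - j' := by
  induction j, hj' using Nat.le_induction with
  | base => exact ⟨.nil, by simp⟩
  | succ j hj' ih =>
    obtain ⟨w, hw⟩ := ih (by omega)
    have hadj : (edgeGraph (applyI μ m E c)).Adj (pathVertex vk j) (pathVertex vk (j + 1)) := by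
      refine (SimpleGraph.fromEdgeSet_adj _).2 ⟨mem_applyI.2 (.inr ⟨vk, j, by omega, rfl⟩), ?_⟩
      cases j with
      | zero => exact fun h => pathVertex_succ_not_mem vk 0 (h ▸ pathVertex_zero_mem vk)
      | succ j => exact fun h => by simpa using (pathVertex_succ_inj.1 h).2
    exact ⟨w.concat hadj, by simp [hw]; omega⟩

/-- Decoding a new vertex `z` as vertex `j` of path `(v, k)` via `z - freshE E = pair v (pair k j)`:
the seed distance from `v` to the root of `wk`, plus the height `j + 1` of `z`, counted negatively
on the path `wk` itself. It is 1-Lipschitz on the grown tree, which bounds distances below. -/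
noncomputable def pathPotential (wk : PathIndex E μ) (z : ℕ) : ℤ :=
  if z < freshE E then ((edgeGraph E).dist z wk.1 : ℤ) else
    let q := (z - freshE E).unpair
    (edgeGraph E).dist q.1 wk.1 +
      if q.1 = wk.1 ∧ q.2.unpair.1 = wk.2 then -(q.2.unpair.2 + 1 : ℤ) else q.2.unpair.2 + 1

lemma pathPotential_of_mem (wk : PathIndex E μ) {u : ℕ} (hu : u ∈ verts E) :
    pathPotential wk u = (edgeGraph E).dist u wk.1 := by
  simp [pathPotential, lt_freshE hu]

lemma pathPotential_pathVertex (wk vk : PathIndex E μ) (j : ℕ) :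
    pathPotential wk (pathVertex vk j) =
      (edgeGraph E).dist vk.1 wk.1 + if vk = wk then -(j : ℤ) else j := by
  cases j with
  | zero => simp [pathVertex, pathPotential_of_mem wk vk.1.2]
  | succ j =>
    have hroot : (vk.1 : ℕ) = wk.1 ∧ (vk.2 : ℕ) = wk.2 ↔ vk = wk := by
      rw [Prod.ext_iff, Subtype.ext_iff, Fin.ext_iff]
    simp only [pathPotential, pathVertex, lblI, Nat.not_lt.2 (Nat.le_add_right _ _), if_false,
      Nat.add_sub_cancel_left, Nat.unpair_pair, hroot]
    push_cast
    rfl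

lemma pathPotential_le_add_one_of_adj (wk : PathIndex E μ) {x y : ℕ}
    (hxy : (edgeGraph (applyI μ m E c)).Adj x y) : pathPotential wk x ≤ pathPotential wk y + 1 := by
  rw [SimpleGraph.fromEdgeSet_adj, mem_coe, mem_applyI] at hxy
  obtain ⟨he | ⟨vk, i, -, he⟩, hne⟩ := hxy
  · have hadj : (edgeGraph E).Adj x y := (SimpleGraph.fromEdgeSet_adj _).2 ⟨he, hne⟩
    obtain ⟨hx, hy⟩ := mem_verts_of_adj hadj
    rw [pathPotential_of_mem wk hx, pathPotential_of_mem wk hy]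
    have := hadj.reachable.dist_triangle_left wk.1
    rw [SimpleGraph.dist_eq_one_iff_adj.2 hadj] at this
    omega
  · rcases Sym2.eq_iff.1 he with ⟨rfl, rfl⟩ | ⟨rfl, rfl⟩ <;>
    · rw [pathPotential_pathVertex, pathPotential_pathVertex]
      split_ifs <;> push_cast <;> omega

end GrownTree

section Distances

variable {μ : ℕ} {m : Fin μ → ℕ} {E : Finset (Sym2 ℕ)} {c : {x // x ∈ verts E} → Fin μ → Fin μ}

lemma dist_pathVertex_of_le (vk : PathIndex E μ) {j' j : ℕ} (hj' : j' ≤ j)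
    (hj : j ≤ pathLength m c vk) :
    (edgeGraph (applyI μ m E c)).dist (pathVertex vk j') (pathVertex vk j) = j - j' := by
  obtain ⟨w, hw⟩ := exists_walk_pathVertex vk hj' hj
  rw [← hw]
  refine SimpleGraph.dist_eq_length_of_le_sub (pathPotential vk)
    (fun _ _ => pathPotential_le_add_one_of_adj vk) w ?_
  simp only [pathPotential_pathVertex, if_true, SimpleGraph.dist_self, hw]
  omega

lemma dist_pathVertex_self (vk : PathIndex E μ) {j j' : ℕ} (hj : j ≤ pathLength m c vk)
    (hj' : j' ≤ pathLength m c vk) :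
    (edgeGraph (applyI μ m E c)).dist (pathVertex vk j) (pathVertex vk j') = Nat.dist j j' := by
  rcases le_total j j' with h | h
  · rw [dist_pathVertex_of_le vk h hj', Nat.dist_eq_sub_of_le h]
  · rw [SimpleGraph.dist_comm, dist_pathVertex_of_le vk h hj, Nat.dist_eq_sub_of_le_right h]

lemma dist_pathVertex_of_ne (hT : IsTreeEdges E) {vk wk : PathIndex E μ} (hne : vk ≠ wk)
    {j j' : ℕ} (hj : j ≤ pathLength m c vk) (hj' : j' ≤ pathLength m c wk) :
    (edgeGraph (applyI μ m E c)).dist (pathVertex vk j) (pathVertex wk j') =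
      (edgeGraph E).dist vk.1 wk.1 + j + j' := by
  obtain ⟨w₁, hw₁⟩ := exists_walk_pathVertex vk (Nat.zero_le j) hj
  obtain ⟨w₂, hw₂⟩ := exists_walk_pathVertex wk (Nat.zero_le j') hj'
  obtain ⟨w, hw⟩ := (hT.2.2.2 _ vk.1.2 _ wk.1.2).exists_walk_length_eq_dist
  obtain ⟨W, hW⟩ : ∃ W : (edgeGraph (applyI μ m E c)).Walk (pathVertex vk j) (pathVertex wk j'),
      W.length = (edgeGraph E).dist vk.1 wk.1 + j + j' :=
    ⟨(w₁.copy (pathVertex_zero vk) rfl).reverse.append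
      ((w.mapLe edgeGraph_le_applyI).append (w₂.copy (pathVertex_zero wk) rfl)), by
      simp only [SimpleGraph.Walk.length_append, SimpleGraph.Walk.length_reverse,
        SimpleGraph.Walk.length_copy, SimpleGraph.Walk.length_mapLe, hw₁, hw₂, hw, edgeGraph]
      omega⟩
  rw [← hW]
  refine SimpleGraph.dist_eq_length_of_le_sub (pathPotential wk)
    (fun _ _ => pathPotential_le_add_one_of_adj wk) W ?_
  simp only [pathPotential_pathVertex, if_true, if_neg hne, SimpleGraph.dist_self, hW]
  push_cast
  omega

lemma dist_applyI_of_mem (hμ : 1 ≤ μ) (hT : IsTreeEdges E) {u w : ℕ} (hu : u ∈ verts E)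
    (hw : w ∈ verts E) :
    (edgeGraph (applyI μ m E c)).dist u w = (edgeGraph E).dist u w := by
  obtain rfl | huw := eq_or_ne u w
  · simp
  have hne : ((⟨u, hu⟩, ⟨0, hμ⟩) : PathIndex E μ) ≠ (⟨w, hw⟩, ⟨0, hμ⟩) := by simpa using huw
  exact dist_pathVertex_of_ne hT hne (Nat.zero_le _) (Nat.zero_le _)

lemma dist_pathVertex_succ_of_mem (hμ : 1 ≤ μ) (hT : IsTreeEdges E) {vk : PathIndex E μ}
    {j : ℕ} (hj : j < pathLength m c vk) {u : ℕ} (hu : u ∈ verts E) :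
    (edgeGraph (applyI μ m E c)).dist (pathVertex vk (j + 1)) u =
      (edgeGraph E).dist vk.1 u + (j + 1) := by
  obtain rfl | hne := eq_or_ne vk (⟨u, hu⟩, ⟨0, hμ⟩)
  · rw [SimpleGraph.dist_comm]
    simpa using dist_pathVertex_of_le (m := m) (c := c) (⟨u, hu⟩, ⟨0, hμ⟩) (Nat.zero_le (j + 1)) hj
  · simpa using dist_pathVertex_of_ne hT hne hj (Nat.zero_le _)

end Distances

lemma sum_sum_union_of_symm {α M : Type*} [DecidableEq α] [AddCommMonoid M] {A B : Finset α}
    (h : Disjoint A B) (f : α → α → M) (hf : ∀ x y, f x y = f y x) :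
    ∑ x ∈ A ∪ B, ∑ y ∈ A ∪ B, f x y =
      ∑ x ∈ A, ∑ y ∈ A, f x y + 2 • ∑ x ∈ B, ∑ y ∈ A, f x y + ∑ x ∈ B, ∑ y ∈ B, f x y := by
  simp_rw [sum_union h, sum_add_distrib]
  rw [sum_comm (s := A) (t := B), two_nsmul]
  simp_rw [hf _]
  abel

lemma sum_range_add_one_eq_choose (L : ℕ) :
    ∑ j ∈ range L, ((j : ℝ) + 1) = ((L + 1).choose 2 : ℕ) := by
  rw [Nat.cast_choose_two]
  induction L with
  | zero => simp
  | succ L ih => rw [sum_range_succ, ih]; push_cast; ring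

lemma sum_range_sum_range_dist (L : ℕ) :
    ∑ j ∈ range L, ∑ j' ∈ range L, (Nat.dist j j' : ℝ) =
      2 * ∑ l ∈ Icc 2 L, ((l.choose 2 : ℕ) : ℝ) := by
  induction L with
  | zero => simp
  | succ L ih =>
    have hrow : ∑ j ∈ range L, (Nat.dist j L : ℝ) = ((L + 1).choose 2 : ℕ) := by
      rw [← sum_range_add_one_eq_choose, ← sum_range_reflect (fun j => (j : ℝ) + 1)]
      refine sum_congr rfl fun j hj => ?_
      have : Nat.dist j L = L - 1 - j + 1 := by
        have := mem_range.1 hj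
        unfold Nat.dist
        omega
      rw [this, Nat.cast_succ]
    have hIcc : ∑ l ∈ Icc 2 (L + 1), ((l.choose 2 : ℕ) : ℝ) =
        ∑ l ∈ Icc 2 L, ((l.choose 2 : ℕ) : ℝ) + ((L + 1).choose 2 : ℕ) := by
      rcases Nat.eq_zero_or_pos L with rfl | hL
      · simp
      · exact sum_Icc_succ_top (by omega) _
    simp only [sum_range_succ, sum_add_distrib, Nat.dist_self, Nat.cast_zero, add_zero]
    simp_rw [Nat.dist_comm L]
    rw [ih, hrow, hIcc]
    ring

lemma sum_range_sum_range_add_add (r : ℝ) (a b : ℕ) :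
    ∑ j ∈ range a, ∑ j' ∈ range b, (r + ((j : ℝ) + 1) + ((j' : ℝ) + 1)) =
      r * (a * b) + ((a + 1).choose 2 : ℕ) * b + a * ((b + 1).choose 2 : ℕ) := by
  have hrow : ∀ j : ℕ, ∑ j' ∈ range b, (r + ((j : ℝ) + 1) + ((j' : ℝ) + 1)) =
      b * (r + ((j : ℝ) + 1)) + ((b + 1).choose 2 : ℕ) := by
    intro j
    rw [sum_add_distrib, sum_range_add_one_eq_choose, sum_const, card_range, nsmul_eq_mul]
  simp_rw [hrow]
  rw [sum_add_distrib, ← mul_sum, sum_add_distrib, sum_range_add_one_eq_choose]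
  simp only [sum_const, card_range, nsmul_eq_mul]
  ring

section WienerIndex

variable {μ : ℕ} {m : Fin μ → ℕ} {E : Finset (Sym2 ℕ)} {c : {x // x ∈ verts E} → Fin μ → Fin μ}

variable (m c) in
def newVertices : Finset ℕ :=
  univ.biUnion fun vk : PathIndex E μ =>
    (range (pathLength m c vk)).image fun j => pathVertex vk (j + 1)

lemma verts_applyI : verts (applyI μ m E c) = verts E ∪ newVertices m c := by
  rw [applyI, verts_union, verts_biUnion]
  ext x
  have key := fun vk : PathIndex E μ => Finset.ext_iff.1
    (insert_verts_pathEdges vk.1 (fun j => lblI (freshE E) vk.1 vk.2 j) (pathLength m c vk)) x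
  simp only [mem_union, mem_biUnion, mem_univ, true_and, newVertices, mem_insert] at key ⊢
  constructor
  · rintro (hx | ⟨vk, hx⟩)
    · exact .inl hx
    · exact ((key vk).1 (.inr hx)).imp (by rintro rfl; exact vk.1.2) (⟨vk, ·⟩)
  · rintro (hx | ⟨vk, hx⟩)
    · exact .inl hx
    · exact ((key vk).2 (.inr hx)).imp (by rintro rfl; exact vk.1.2) (⟨vk, ·⟩)

lemma disjoint_verts_newVertices : Disjoint (verts E) (newVertices m c) := by
  simp only [disjoint_right, newVertices, mem_biUnion, mem_image, mem_univ, true_and]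
  rintro _ ⟨vk, j, -, rfl⟩
  exact pathVertex_succ_not_mem vk j

lemma sum_newVertices {M : Type*} [AddCommMonoid M] (g : ℕ → M) :
    ∑ x ∈ newVertices m c, g x =
      ∑ vk : PathIndex E μ, ∑ j ∈ range (pathLength m c vk), g (pathVertex vk (j + 1)) := by
  rw [newVertices, sum_biUnion]
  · exact sum_congr rfl fun vk _ =>
      sum_image fun _ _ _ _ h => (pathVertex_succ_inj.1 h).2
  · intro vk _ wk _ hne
    simp only [Function.onFun, disjoint_left, mem_image]
    rintro _ ⟨j, -, rfl⟩ ⟨j', -, h⟩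
    exact hne (pathVertex_succ_inj.1 h).1.symm

lemma sum_newVertices_sum_verts_dist (hμ : 1 ≤ μ) (hT : IsTreeEdges E) :
    ∑ x ∈ newVertices m c, ∑ u ∈ verts E, ((edgeGraph (applyI μ m E c)).dist x u : ℝ) =
      ∑ vk : PathIndex E μ, (pathLength m c vk * ∑ u ∈ verts E, ((edgeGraph E).dist vk.1 u : ℝ)
        + #(verts E) * ((pathLength m c vk + 1).choose 2 : ℕ)) := by
  rw [sum_newVertices]
  refine sum_congr rfl fun vk _ => ?_
  have hrow : ∀ j ∈ range (pathLength m c vk),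
      ∑ u ∈ verts E, ((edgeGraph (applyI μ m E c)).dist (pathVertex vk (j + 1)) u : ℝ) =
        ∑ u ∈ verts E, ((edgeGraph E).dist vk.1 u : ℝ) + #(verts E) * ((j : ℝ) + 1) := by
    intro j hj
    rw [← nsmul_eq_mul, ← sum_const, ← sum_add_distrib]
    refine sum_congr rfl fun u hu => ?_
    rw [dist_pathVertex_succ_of_mem hμ hT (mem_range.1 hj) hu]
    push_cast
    rfl
  rw [sum_congr rfl hrow, sum_add_distrib, ← mul_sum, sum_range_add_one_eq_choose, sum_const,
    card_range, nsmul_eq_mul]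

lemma sum_newVertices_sum_newVertices_dist (hT : IsTreeEdges E) :
    ∑ x ∈ newVertices m c, ∑ y ∈ newVertices m c, ((edgeGraph (applyI μ m E c)).dist x y : ℝ) =
      ∑ vk : PathIndex E μ, (2 * ∑ l ∈ Icc 2 (pathLength m c vk), ((l.choose 2 : ℕ) : ℝ)
        + ∑ wk ∈ univ.erase vk,
          (((edgeGraph E).dist vk.1 wk.1 : ℝ) * (pathLength m c vk * pathLength m c wk)
            + ((pathLength m c vk + 1).choose 2 : ℕ) * pathLength m c wk
            + pathLength m c vk * ((pathLength m c wk + 1).choose 2 : ℕ))) := by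
  simp only [sum_newVertices]
  refine sum_congr rfl fun vk _ => ?_
  rw [sum_comm, ← add_sum_erase _ _ (mem_univ vk)]
  congr 1
  · rw [← sum_range_sum_range_dist]
    refine sum_congr rfl fun j hj => sum_congr rfl fun j' hj' => ?_
    rw [dist_pathVertex_self vk (mem_range.1 hj) (mem_range.1 hj'), Nat.dist_succ_succ]
  · refine sum_congr rfl fun wk hwk => ?_
    rw [← sum_range_sum_range_add_add]
    refine sum_congr rfl fun j hj => sum_congr rfl fun j' hj' => ?_
    rw [dist_pathVertex_of_ne hT (ne_of_mem_erase hwk).symm (mem_range.1 hj) (mem_range.1 hj')]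
    push_cast
    rfl

lemma two_mul_wienerE_applyI (hμ : 1 ≤ μ) (hT : IsTreeEdges E) :
    2 * wienerE (applyI μ m E c) = 2 * wienerE E
      + 2 * ∑ vk : PathIndex E μ,
        (pathLength m c vk * ∑ u ∈ verts E, ((edgeGraph E).dist vk.1 u : ℝ)
          + #(verts E) * ((pathLength m c vk + 1).choose 2 : ℕ))
      + ∑ vk : PathIndex E μ, (2 * ∑ l ∈ Icc 2 (pathLength m c vk), ((l.choose 2 : ℕ) : ℝ)
        + ∑ wk ∈ univ.erase vk,
          (((edgeGraph E).dist vk.1 wk.1 : ℝ) * (pathLength m c vk * pathLength m c wk)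
            + ((pathLength m c vk + 1).choose 2 : ℕ) * pathLength m c wk
            + pathLength m c vk * ((pathLength m c wk + 1).choose 2 : ℕ))) := by
  have h2 (F : Finset (Sym2 ℕ)) : 2 * wienerE F =
      ∑ u ∈ verts F, ∑ v ∈ verts F, ((edgeGraph F).dist u v : ℝ) :=
    mul_div_cancel₀ _ two_ne_zero
  rw [h2, h2, verts_applyI, sum_sum_union_of_symm disjoint_verts_newVertices
      (fun x y => ((edgeGraph (applyI μ m E c)).dist x y : ℝ))
      (fun x y => by rw [SimpleGraph.dist_comm]), sum_newVertices_sum_verts_dist hμ hT,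
    sum_newVertices_sum_newVertices_dist hT, nsmul_eq_mul, Nat.cast_ofNat]
  congr 2
  refine sum_congr rfl fun u hu => sum_congr rfl fun w hw => ?_
  rw [dist_applyI_of_mem hμ hT hu hw]

end WienerIndex

section IidExpectation

variable {ι κ : Type*} [Fintype ι] [DecidableEq ι] [Fintype κ] {p : κ → ℝ}

noncomputable def iidExpect (p : κ → ℝ) (F : (ι → κ) → ℝ) : ℝ := ∑ c, (∏ i, p (c i)) * F c

lemma iidExpect_add (F G : (ι → κ) → ℝ) :
    iidExpect p (fun c => F c + G c) = iidExpect p F + iidExpect p G := by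
  simp only [iidExpect, mul_add, sum_add_distrib]

lemma iidExpect_sum {α : Type*} (s : Finset α) (F : α → (ι → κ) → ℝ) :
    iidExpect p (fun c => ∑ a ∈ s, F a c) = ∑ a ∈ s, iidExpect p (F a) := by
  simp only [iidExpect, mul_sum]
  exact sum_comm

lemma iidExpect_const_mul (a : ℝ) (F : (ι → κ) → ℝ) :
    iidExpect p (fun c => a * F c) = a * iidExpect p F := by
  simp only [iidExpect, mul_sum]
  exact sum_congr rfl fun _ _ => mul_left_comm _ _ _

lemma iidExpect_prod (g : ι → κ → ℝ) :
    iidExpect p (fun c => ∏ i, g i (c i)) = ∏ i, ∑ k, p k * g i k := by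
  simp only [iidExpect, ← prod_mul_distrib]
  exact (Fintype.prod_sum fun i k => p k * g i k).symm

lemma iidExpect_const (hp : ∑ k, p k = 1) (a : ℝ) : iidExpect p (fun _ : ι → κ => a) = a := by
  have h := iidExpect_const_mul (p := p) a fun _ : ι → κ => 1
  have h1 := iidExpect_prod (p := p) fun (_ : ι) (_ : κ) => (1 : ℝ)
  simp only [mul_one, prod_const_one, hp] at h h1
  rw [h, h1, mul_one]

lemma iidExpect_eq_of_apply (hp : ∑ k, p k = 1) {F : (ι → κ) → ℝ} (i : ι) (f : κ → ℝ)
    (hF : ∀ c, F c = f (c i)) : iidExpect p F = ∑ k, p k * f k := by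
  have h := iidExpect_prod (p := p) (Function.update (fun _ _ => 1) i f)
  rw [Fintype.prod_eq_single i fun j hj => by simp [Function.update_of_ne hj, hp]] at h
  rw [← Function.update_self i f (fun _ _ => (1 : ℝ)), ← h]
  congr 1
  ext c
  rw [hF, Fintype.prod_eq_single i fun j hj => by simp [Function.update_of_ne hj]]
  simp

lemma iidExpect_eq_of_apply_mul_apply (hp : ∑ k, p k = 1) {F : (ι → κ) → ℝ} {i j : ι}
    (hij : i ≠ j) (f g : κ → ℝ) (hF : ∀ c, F c = f (c i) * g (c j)) :
    iidExpect p F = (∑ k, p k * f k) * ∑ k, p k * g k := by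
  have h := iidExpect_prod (p := p) (Function.update (Function.update (fun _ _ => 1) i f) j g)
  rw [Fintype.prod_eq_mul i j hij fun l hl => by
    simp [Function.update_of_ne hl.1, Function.update_of_ne hl.2, hp]] at h
  simp only [Function.update_self, Function.update_of_ne hij] at h
  rw [← h]
  congr 1
  ext c
  rw [hF, Fintype.prod_eq_mul i j hij fun l hl => by
    simp [Function.update_of_ne hl.1, Function.update_of_ne hl.2]]
  simp [Function.update_of_ne hij]

end IidExpectation

lemma expI_one_eq_iidExpect {μ : ℕ} (p : Fin μ → ℝ) (m : Fin μ → ℕ) (f : Finset (Sym2 ℕ) → ℝ)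
    (E : Finset (Sym2 ℕ)) :
    expI μ p m f 1 E =
      iidExpect p fun c : PathIndex E μ → Fin μ => f (applyI μ m E (Function.curry c)) :=
  (Fintype.sum_equiv (Equiv.curry _ _ _) _ _ fun c => by rw [Fintype.prod_prod_type]; rfl).symm

section Expectation

variable {μ : ℕ} {p : Fin μ → ℝ} {m : Fin μ → ℕ} {E : Finset (Sym2 ℕ)}

lemma pathLength_curry (c : PathIndex E μ → Fin μ) (vk : PathIndex E μ) :
    pathLength m (Function.curry c) vk = m (c vk) := rfl

lemma iidExpect_two_mul_wienerE_applyI (hμ : 1 ≤ μ) (hT : IsTreeEdges E) (hp : ∑ k, p k = 1) :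
    iidExpect p (fun c : PathIndex E μ → Fin μ => 2 * wienerE (applyI μ m E (Function.curry c))) =
      2 * wienerE E
      + 2 * ∑ vk : PathIndex E μ,
        ((∑ k, p k * m k) * ∑ u ∈ verts E, ((edgeGraph E).dist vk.1 u : ℝ)
          + #(verts E) * ∑ k, p k * ((m k + 1).choose 2 : ℕ))
      + ∑ vk : PathIndex E μ, (2 * ∑ k, p k * ∑ l ∈ Icc 2 (m k), ((l.choose 2 : ℕ) : ℝ)
        + ∑ wk ∈ univ.erase vk,
          (((edgeGraph E).dist vk.1 wk.1 : ℝ) * ((∑ k, p k * m k) * ∑ k, p k * m k)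
            + (∑ k, p k * ((m k + 1).choose 2 : ℕ)) * ∑ k, p k * m k
            + (∑ k, p k * m k) * ∑ k, p k * ((m k + 1).choose 2 : ℕ))) := by
  simp_rw [two_mul_wienerE_applyI hμ hT, pathLength_curry]
  rw [iidExpect_add, iidExpect_add, iidExpect_const hp, iidExpect_const_mul, iidExpect_sum,
    iidExpect_sum]
  refine congrArg₂ (· + ·) (congrArg₂ (· + ·) rfl (congrArg (2 * ·) (sum_congr rfl fun vk _ => ?_)))
    (sum_congr rfl fun vk _ => ?_)
  · rw [iidExpect_eq_of_apply hp vk (fun k => m k * ∑ u ∈ verts E, ((edgeGraph E).dist vk.1 u : ℝ)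
      + #(verts E) * ((m k + 1).choose 2 : ℕ)) fun c => rfl]
    simp only [mul_add, sum_add_distrib, ← mul_assoc, ← sum_mul]
    rw [mul_sum (s := (univ : Finset (Fin μ)))]
    exact congrArg _ (sum_congr rfl fun _ _ => by ring)
  · rw [iidExpect_add, iidExpect_const_mul, iidExpect_sum,
      iidExpect_eq_of_apply hp vk (fun k => ∑ l ∈ Icc 2 (m k), ((l.choose 2 : ℕ) : ℝ)) fun c => rfl]
    congr 1
    refine sum_congr rfl fun wk hwk => ?_
    have hne := (ne_of_mem_erase hwk).symm
    rw [iidExpect_add, iidExpect_add, iidExpect_const_mul,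
      iidExpect_eq_of_apply_mul_apply hp hne (fun k => (m k : ℝ)) (fun k => (m k : ℝ))
        fun c => rfl,
      iidExpect_eq_of_apply_mul_apply hp hne (fun k => (((m k + 1).choose 2 : ℕ) : ℝ))
        (fun k => (m k : ℝ)) fun c => rfl,
      iidExpect_eq_of_apply_mul_apply hp hne (fun k => (m k : ℝ))
        (fun k => (((m k + 1).choose 2 : ℕ) : ℝ)) fun c => rfl]

end Expectation

section Counting

variable (E : Finset (Sym2 ℕ)) (μ : ℕ)

lemma card_pathIndex : Fintype.card (PathIndex E μ) = #(verts E) * μ := by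
  simp [PathIndex]

lemma sum_pathIndex_fst (g : ℕ → ℝ) : ∑ vk : PathIndex E μ, g vk.1 = μ * ∑ u ∈ verts E, g u := by
  simp only [Fintype.sum_prod_type, sum_const, card_univ, Fintype.card_fin, nsmul_eq_mul, ← mul_sum]
  rw [sum_coe_sort (verts E) g]

lemma sum_sum_dist_fst :
    ∑ vk : PathIndex E μ, ∑ u ∈ verts E, ((edgeGraph E).dist vk.1 u : ℝ) =
      μ * (2 * wienerE E) := by
  rw [sum_pathIndex_fst E μ fun v => ∑ u ∈ verts E, ((edgeGraph E).dist v u : ℝ), wienerE,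
    mul_div_cancel₀ _ two_ne_zero]

lemma sum_sum_erase_dist_fst_fst :
    ∑ vk : PathIndex E μ, ∑ wk ∈ univ.erase vk, ((edgeGraph E).dist vk.1 wk.1 : ℝ) =
      μ ^ 2 * (2 * wienerE E) := by
  rw [sum_congr rfl fun vk _ => (sum_erase univ (by simp)).trans
      (sum_pathIndex_fst E μ fun w => ((edgeGraph E).dist vk.1 w : ℝ)),
    ← mul_sum, sum_sum_dist_fst]
  ring

end Counting

theorem expected_wiener_opI_one_general (μ : ℕ) (hμ : 1 ≤ μ)
    (m : Fin μ → ℕ)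
    (p : Fin μ → ℝ) (hp1 : ∑ i, p i = 1)
    (E₀ : Finset (Sym2 ℕ)) (hT : IsTreeEdges E₀)
    (h : ℕ) (hh : h = (verts E₀).card)
    (WT : ℝ) (hWT : WT = wienerE E₀)
    (S : ℝ) (hS : S = ∑ i, p i * (m i : ℝ)) :
    expI μ p m wienerE 1 E₀
      = WT * (μ * S + 1) ^ 2
        + μ * (μ * S + 1) * (∑ i, p i * (((m i + 1).choose 2 : ℕ) : ℝ)) * (h : ℝ) ^ 2
        + (μ * (∑ i, p i * ∑ l ∈ Finset.Icc 2 (m i), ((l.choose 2 : ℕ) : ℝ))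
            + (2 * S * ((μ.choose 2 : ℕ) : ℝ) - (μ : ℝ) ^ 2 * S)
              * (∑ i, p i * (((m i + 1).choose 2 : ℕ) : ℝ))) * (h : ℝ) := by
  subst hh hWT hS
  have hE := iidExpect_two_mul_wienerE_applyI (p := p) (m := m) hμ hT hp1
  simp only [iidExpect_const_mul, sum_add_distrib, ← mul_sum, ← sum_mul, sum_const, card_univ,
    cast_card_erase_of_mem (mem_univ _), sum_sum_dist_fst, sum_sum_erase_dist_fst_fst,
    card_pathIndex, nsmul_eq_mul, Nat.cast_mul] at hE
  rw [expI_one_eq_iidExpect, Nat.cast_choose_two]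
  linear_combination hE / 2

/-- Expected Wiener index of `T_I(1)`, obtained from a seed tree with `h` vertices
and Wiener index `W_T` by one application of Operation-I. -/
theorem expected_wiener_opI_one (μ : ℕ) (hμ : 1 ≤ μ)
    (m : Fin μ → ℕ) (hmpos : ∀ i, 0 < m i) (hminj : Function.Injective m)
    (p : Fin μ → ℝ) (hp : ∀ i, 0 ≤ p i) (hp1 : ∑ i, p i = 1)
    (E₀ : Finset (Sym2 ℕ)) (hT : IsTreeEdges E₀)
    (h : ℕ) (hh : h = (verts E₀).card)
    (WT : ℝ) (hWT : WT = wienerE E₀)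
    (S : ℝ) (hS : S = ∑ i, p i * (m i : ℝ)) :
    expI μ p m wienerE 1 E₀
      = WT * (μ * S + 1) ^ 2
        + μ * (μ * S + 1) * (∑ i, p i * (((m i + 1).choose 2 : ℕ) : ℝ)) * (h : ℝ) ^ 2
        + (μ * (∑ i, p i * ∑ l ∈ Finset.Icc 2 (m i), ((l.choose 2 : ℕ) : ℝ))
            + (2 * S * ((μ.choose 2 : ℕ) : ℝ) - (μ : ℝ) ^ 2 * S)
              * (∑ i, p i * (((m i + 1).choose 2 : ℕ) : ℝ))) * (h : ℝ) :=
  expected_wiener_opI_one_general μ hμ m p hp1 E₀ hT h hh WT hWT S hS
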